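/- arXiv:2303.17781 — 5 statements merged into one kernel-verified Lean document; each statement's English description precedes it below -/
import Mathlib

section
/- Let f : [0,∞) → ℝ be a C³ solution of f''' + c f f'' + m c (1 - (f')²) = 0 with c > 0, m > 0, f(0) = 0, f'(0) = 0, 0 < f'(z) < 1 for z > 0, f''(z) > 0 for z ≥ 0. Then f'''(z) < 0 for all z > 0. -/
open Set

/-! Solving the equation for `f'''` gives `f''' = -c f f'' - m c (1 - f'²)`, and both terms are
negative for `z > 0`: `f'' > 0`, `0 < f' < 1`, and `f > 0` because `f` increases from `f 0 = 0`. -/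

lemma pos_of_deriv_pos_of_eq_zero {f : ℝ → ℝ} (hf : ContinuousOn f (Ici 0))
    (hderiv : ∀ x > (0:ℝ), 0 < deriv f x) (hf0 : f 0 = 0) {z : ℝ} (hz : 0 < z) : 0 < f z := by
  have hmono : StrictMonoOn f (Ici 0) :=
    strictMonoOn_of_deriv_pos (convex_Ici 0) hf (by rw [interior_Ici]; exact hderiv)
  simpa only [hf0] using hmono self_mem_Ici hz.le hz

lemma neg_of_add_mul_add_mul_one_sub_sq_eq_zero {c m y y' y'' y''' : ℝ} (hc : 0 < c)
    (hm : 0 < m) (hy : 0 < y) (hy'' : 0 < y'') (hy' : y' ^ 2 < 1)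
    (h : y''' + c * y * y'' + m * c * (1 - y' ^ 2) = 0) : y''' < 0 := by
  have hconv_term : 0 < c * y * y'' := by positivity
  have hsq_term : 0 < m * c * (1 - y' ^ 2) := mul_pos (mul_pos hm hc) (sub_pos.2 hy')
  linarith

theorem self_similar_third_deriv_neg_general
    (f : ℝ → ℝ) (c m : ℝ)
    (hf : ContDiff ℝ 3 f) (hc : 0 < c) (hm : 0 < m)
    (hode : ∀ z ≥ (0:ℝ),
      deriv^[3] f z + c * f z * deriv^[2] f z + m * c * (1 - (deriv f z) ^ 2) = 0)
    (hf0 : f 0 = 0)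
    (hrange : ∀ z > (0:ℝ), 0 < deriv f z ∧ deriv f z < 1)
    (hconv : ∀ z ≥ (0:ℝ), 0 < deriv^[2] f z) :
    ∀ z > (0:ℝ), deriv^[3] f z < 0 := by
  intro z hz
  have hfz : 0 < f z :=
    pos_of_deriv_pos_of_eq_zero hf.continuous.continuousOn (fun x hx ↦ (hrange x hx).1) hf0 hz
  have hsq : deriv f z ^ 2 < 1 := pow_lt_one₀ (hrange z hz).1.le (hrange z hz).2 two_ne_zero
  exact neg_of_add_mul_add_mul_one_sub_sq_eq_zero hc hm hfz (hconv z hz.le) hsq (hode z hz.le)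

/-- Self-similar boundary layer ODE: the third derivative is negative on `(0,∞)`. -/
theorem self_similar_third_deriv_neg
    (f : ℝ → ℝ) (c m : ℝ)
    (hf : ContDiff ℝ 3 f) (hc : 0 < c) (hm : 0 < m)
    (hode : ∀ z ≥ (0:ℝ),
      deriv^[3] f z + c * f z * deriv^[2] f z + m * c * (1 - (deriv f z) ^ 2) = 0)
    (hf0 : f 0 = 0) (hf'0 : deriv f 0 = 0)
    (hrange : ∀ z > (0:ℝ), 0 < deriv f z ∧ deriv f z < 1)
    (hconv : ∀ z ≥ (0:ℝ), 0 < deriv^[2] f z) :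
    ∀ z > (0:ℝ), deriv^[3] f z < 0 :=
  self_similar_third_deriv_neg_general f c m hf hc hm hode hf0 hrange hconv
end

section
/- Suppose 1 - f'(z) = C₃ exp(-C₄ z²)(1 + o(1)) as z → ∞ with C₃, C₄ > 0, f'(0) = 0, f' is strictly increasing from 0 to 1, and f'' > 0. Let η = f'(z) and Y(η) = f''(z(η)) where z(η) is the inverse function. If also f''(z) ~ 2 C₄ z (1 - f'(z)) as z → ∞, then Y(η) ~ C₅ (1-η)√(-ln(1-η)) as η → 1⁻ for some constant C₅ > 0. -/
/-!
Taking logarithms in the Gaussian decay gives `-log (1 - f' z) = C₄ z² + O(1)`, so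
`√(-log (1 - f' z)) ~ √C₄ z`, and the hypothesis `f'' ~ 2 C₄ z (1 - f')` becomes
`f'' z ~ 2 √C₄ (1 - f' z) √(-log (1 - f' z))`; thus `C₅ = 2 √C₄`. By the intermediate value
theorem every `η ∈ [f' M, 1)` is `f' z` for some `z ≥ M`, so near `1⁻` the function `g` is a right
inverse of `f'` and `g η → ∞`; substituting `z = g η` gives the claim.
-/

open Set Filter Topology Real

section

variable {α δ : Type*} [ConditionallyCompleteLinearOrder α] [TopologicalSpace α] [OrderTopology α]
  [DenselyOrdered α] [LinearOrder δ] [TopologicalSpace δ] [OrderClosedTopology δ]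
  {p : α → δ} {g : δ → α} {a : α} {l : δ}

theorem Ico_subset_image_Ici_of_tendsto (hp : ContinuousOn p (Ici a))
    (hl : Tendsto p atTop (𝓝 l)) : Ico (p a) l ⊆ p '' Ici a :=
  isPreconnected_Ici.intermediate_value_Ico self_mem_Ici
    (le_principal_iff.mpr (Ici_mem_atTop a)) hp hl

theorem tendsto_nhdsLT_atTop_of_leftInvOn (hp : ContinuousOn p (Ici a))
    (hl : Tendsto p atTop (𝓝 l)) (hlt : ∀ z ≥ a, p z < l) (hg : LeftInvOn g p (Ici a)) :
    Tendsto g (𝓝[<] l) atTop := by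
  refine tendsto_atTop.2 fun M => ?_
  have hb : Ici (max a M) ⊆ Ici a := Ici_subset_Ici.2 (le_max_left a M)
  filter_upwards [Ico_mem_nhdsLT (hlt _ (le_max_left a M))] with η hη
  obtain ⟨z, hz, rfl⟩ := Ico_subset_image_Ici_of_tendsto (hp.mono hb) hl hη
  rw [hg (hb hz)]
  exact (le_max_right a M).trans hz

theorem eventually_nhdsLT_apply_eq_of_leftInvOn (hp : ContinuousOn p (Ici a))
    (hl : Tendsto p atTop (𝓝 l)) (ha : p a < l) (hg : LeftInvOn g p (Ici a)) :
    ∀ᶠ η in 𝓝[<] l, p (g η) = η := by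
  filter_upwards [Ico_mem_nhdsLT ha] with η hη
  exact hg.rightInvOn_image (Ico_subset_image_Ici_of_tendsto hp hl hη)

end

theorem tendsto_neg_log_div_of_tendsto_div_gaussian {u : ℝ → ℝ} {C₃ C₄ : ℝ} (hC₃ : C₃ ≠ 0)
    (hC₄ : 0 < C₄) (h : Tendsto (fun z => u z / (C₃ * exp (-C₄ * z ^ 2))) atTop (𝓝 1)) :
    Tendsto (fun z => -log (u z) / (C₄ * z ^ 2)) atTop (𝓝 1) := by
  have hlog : Tendsto (fun z => log (u z / (C₃ * exp (-C₄ * z ^ 2)))) atTop (𝓝 0) := by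
    simpa [Function.comp_def] using (continuousAt_log one_ne_zero).tendsto.comp h
  have hsq : Tendsto (fun z : ℝ => C₄ * z ^ 2) atTop atTop :=
    (tendsto_pow_atTop two_ne_zero).const_mul_atTop hC₄
  have hlim : Tendsto
      (fun z => 1 + (-log C₃ - log (u z / (C₃ * exp (-C₄ * z ^ 2)))) / (C₄ * z ^ 2))
      atTop (𝓝 1) := by
    simpa using tendsto_const_nhds.add ((tendsto_const_nhds.sub hlog).div_atTop hsq)
  refine hlim.congr' ?_
  filter_upwards [h.eventually_ne one_ne_zero, eventually_ne_atTop 0] with z hratio hz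
  have hu : u z ≠ 0 := fun h0 => hratio (by simp [h0])
  rw [log_div hu (by positivity), log_mul hC₃ (exp_ne_zero _), log_exp]
  field_simp
  ring

theorem tendsto_div_mul_sqrt_neg_log {u v : ℝ → ℝ} {c : ℝ} (hc : 0 < c)
    (hv : Tendsto (fun z => v z / (2 * c * z * u z)) atTop (𝓝 1))
    (hu : Tendsto (fun z => -log (u z) / (c * z ^ 2)) atTop (𝓝 1)) :
    Tendsto (fun z => v z / (2 * √c * u z * √(-log (u z)))) atTop (𝓝 1) := by
  have hsqrt : Tendsto (fun z => √(-log (u z)) / (√c * z)) atTop (𝓝 1) := by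
    have hlim := (continuous_sqrt.tendsto 1).comp hu
    rw [sqrt_one] at hlim
    refine hlim.congr' ?_
    filter_upwards [eventually_ge_atTop 0] with z hz
    simp only [Function.comp_apply]
    rw [sqrt_div' _ (by positivity), sqrt_mul hc.le, sqrt_sq hz]
  have hlim := hv.mul (hsqrt.inv₀ one_ne_zero)
  rw [inv_one, mul_one] at hlim
  refine hlim.congr' ?_
  filter_upwards [eventually_gt_atTop 0] with z hz
  have hcz : √c * z ≠ 0 := by positivity
  rw [inv_div, div_mul_div_comm, ← mul_div_mul_right (v z) _ hcz]
  congr 1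
  linear_combination (2 * z * u z * √(-log (u z))) * (mul_self_sqrt hc.le).symm

theorem crocco_profile_asymptotics_near_one_general
    (f : ℝ → ℝ) (g : ℝ → ℝ) (C₃ C₄ : ℝ)
    (hC₃ : 0 < C₃) (hC₄ : 0 < C₄)
    (hdecay : Tendsto (fun z => (1 - deriv f z) / (C₃ * Real.exp (-C₄ * z ^ 2)))
      atTop (nhds 1))
    (hrange : ∀ z ≥ (0:ℝ), 0 ≤ deriv f z ∧ deriv f z < 1)
    (hlim : Tendsto (deriv f) atTop (nhds 1))
    (hconv : ∀ z ≥ (0:ℝ), 0 < deriv (deriv f) z)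
    (hginv : ∀ z ≥ (0:ℝ), g (deriv f z) = z)
    (hasymp : Tendsto
      (fun z => deriv (deriv f) z / (2 * C₄ * z * (1 - deriv f z)))
      atTop (nhds 1)) :
    ∃ C₅ > (0:ℝ), Tendsto
      (fun η => deriv (deriv f) (g η)
        / (C₅ * (1 - η) * Real.sqrt (-Real.log (1 - η))))
      (nhdsWithin 1 (Iio 1)) (nhds 1) := by
  have hcont : ContinuousOn (deriv f) (Ici 0) := fun z hz =>
    (differentiableAt_of_deriv_ne_zero (hconv z hz).ne').continuousAt.continuousWithinAt
  have hinv : LeftInvOn g (deriv f) (Ici 0) := hginv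
  have hz := tendsto_div_mul_sqrt_neg_log (u := fun z => 1 - deriv f z) hC₄ hasymp
    (tendsto_neg_log_div_of_tendsto_div_gaussian hC₃.ne' hC₄ hdecay)
  have hg := tendsto_nhdsLT_atTop_of_leftInvOn hcont hlim (fun z hz => (hrange z hz).2) hinv
  refine ⟨2 * √C₄, by positivity, (hz.comp hg).congr' ?_⟩
  filter_upwards [eventually_nhdsLT_apply_eq_of_leftInvOn hcont hlim (hrange 0 le_rfl).2 hinv]
    with η hη
  simp only [Function.comp_apply, hη]

/-- Gaussian decay of `1 - f'` translates, via the Crocco transformation, into the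
asymptotics `Y(η) ~ C₅ (1-η)√(-ln(1-η))` as `η → 1⁻`. -/
theorem crocco_profile_asymptotics_near_one
    (f : ℝ → ℝ) (g : ℝ → ℝ) (C₃ C₄ : ℝ)
    (hC₃ : 0 < C₃) (hC₄ : 0 < C₄)
    (hdecay : Tendsto (fun z => (1 - deriv f z) / (C₃ * Real.exp (-C₄ * z ^ 2)))
      atTop (nhds 1))
    (hf'0 : deriv f 0 = 0)
    (hmono : StrictMonoOn (deriv f) (Ici 0))
    (hrange : ∀ z ≥ (0:ℝ), 0 ≤ deriv f z ∧ deriv f z < 1)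
    (hlim : Tendsto (deriv f) atTop (nhds 1))
    (hconv : ∀ z ≥ (0:ℝ), 0 < deriv (deriv f) z)
    (hginv : ∀ z ≥ (0:ℝ), g (deriv f z) = z)
    (hasymp : Tendsto
      (fun z => deriv (deriv f) z / (2 * C₄ * z * (1 - deriv f z)))
      atTop (nhds 1)) :
    ∃ C₅ > (0:ℝ), Tendsto
      (fun η => deriv (deriv f) (g η)
        / (C₅ * (1 - η) * Real.sqrt (-Real.log (1 - η))))
      (nhdsWithin 1 (Iio 1)) (nhds 1) :=
  crocco_profile_asymptotics_near_one_general f g C₃ C₄ hC₃ hC₄ hdecay hrange hlim hconv hginv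
    hasymp
end

section
/- Let Y : [0,1] → ℝ be continuous with Y(1) = 0, positive and C² on [0,1), satisfying ν Y² Y'' + (η²-1) m a Y' - η ((3m-1)/2) a Y = 0 on (0,1) and ν Y(0) Y'(0) + m a = 0, where ν, a, m > 0. Suppose Y' < 0 on (0,1). Then for any two such solutions Y₁, Y₂ with the additional property that ν Yᵢ Yᵢ'' ≤ -M < 0 on [0,1) for some M > 0, we have Y₁ = Y₂. -/
/-!
Comparison principle: if `Y₁ - Y₂` had a positive maximum on `[0, 1]`, it would sit in `[0, 1)`
because both solutions vanish at `1`. At `0` the boundary condition `ν Y Y' = -m a` forces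
`Y₁'(0) > Y₂'(0)`, so the maximum cannot be there. At an interior maximum the slopes agree, and
subtracting the two equations gives `(Y₁ - Y₂)'' > 0`, using `Y₂' < 0` and `Y₂'' < 0`; this
contradicts the second-derivative test. Exchanging the roles of the solutions gives equality.
-/

open Set Filter Topology

theorem IsLocalMax.deriv_deriv_nonpos {f : ℝ → ℝ} {x : ℝ} (h : IsLocalMax f x)
    (hc : ContinuousAt f x) : deriv (deriv f) x ≤ 0 := by
  by_contra! hpos
  have hmin := isLocalMin_of_deriv_deriv_pos hpos h.deriv_eq_zero hc
  have hconst : f =ᶠ[𝓝 x] fun _ ↦ f x := (h.and hmin).mono fun y hy ↦ le_antisymm hy.1 hy.2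
  have hderiv : deriv f =ᶠ[𝓝 x] fun _ ↦ 0 :=
    hconst.eventuallyEq_nhds.mono fun y hy ↦ by rw [hy.deriv_eq, deriv_const]
  simp [hderiv.deriv_eq] at hpos

theorem IsLocalMaxOn.hasDerivWithinAt_Ici_nonpos {f : ℝ → ℝ} {a f' : ℝ}
    (h : IsLocalMaxOn f (Ici a) a) (hf : HasDerivWithinAt f f' (Ici a) a) : f' ≤ 0 := by
  have hone : (1 : ℝ) ∈ posTangentConeAt (Ici a) a :=
    mem_posTangentConeAt_of_segment_subset <| by
      rw [segment_eq_Icc (by linarith)]; exact Icc_subset_Ici_self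
  simpa using h.hasFDerivWithinAt_nonpos hf.hasFDerivWithinAt hone

theorem ContDiffOn.deriv_deriv_sub {f g : ℝ → ℝ} {s : Set ℝ} (hs : IsOpen s)
    (hf : ContDiffOn ℝ 2 f s) (hg : ContDiffOn ℝ 2 g s) {x : ℝ} (hx : x ∈ s) :
    deriv (deriv (f - g)) x = deriv (deriv f) x - deriv (deriv g) x := by
  have hderiv : deriv (f - g) =ᶠ[𝓝 x] deriv f - deriv g :=
    eventually_mem_nhds_iff.mpr (hs.mem_nhds hx) |>.mono fun y hy ↦ deriv_sub
      ((hf.contDiffAt hy).differentiableAt two_ne_zero)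
      ((hg.contDiffAt hy).differentiableAt two_ne_zero)
  have hf' := (hf.deriv_of_isOpen hs one_add_one_eq_two.le).contDiffAt (hs.mem_nhds hx)
  have hg' := (hg.deriv_of_isOpen hs one_add_one_eq_two.le).contDiffAt (hs.mem_nhds hx)
  rw [hderiv.deriv_eq]
  exact deriv_sub (hf'.differentiableAt one_ne_zero) (hg'.differentiableAt one_ne_zero)

/- Where two solutions touch with equal slopes, the equation reads `ν y² Y'' = κ y + B` with the
same `κ` and `B` for both; `B ≤ 0` because `Y' ≤ 0`. -/
theorem crocco_contact_lt {ν κ B y₁ y₂ q₁ q₂ : ℝ} (hν : 0 < ν) (hB : B ≤ 0) (hy₂ : 0 < y₂)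
    (hy : y₂ < y₁) (h₁ : ν * y₁ ^ 2 * q₁ = κ * y₁ + B) (h₂ : ν * y₂ ^ 2 * q₂ = κ * y₂ + B)
    (hq₂ : q₂ < 0) : q₂ < q₁ := by
  have hneg : κ * y₂ + B < 0 := by rw [← h₂]; exact mul_neg_of_pos_of_neg (by positivity) hq₂
  have key : ν * y₁ ^ 2 * y₂ ^ 2 * (q₁ - q₂) = (y₁ - y₂) * -(y₁ * (κ * y₂ + B) + B * y₂) := by
    linear_combination y₂ ^ 2 * h₁ - y₁ ^ 2 * h₂
  have hpos : 0 < ν * y₁ ^ 2 * y₂ ^ 2 * (q₁ - q₂) := by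
    rw [key]; exact mul_pos (by linarith) (by nlinarith)
  have : 0 < q₁ - q₂ := pos_of_mul_pos_right hpos (by positivity)
  linarith

structure IsCroccoSolution (ν a m : ℝ) (Y : ℝ → ℝ) : Prop where
  continuousOn : ContinuousOn Y (Icc 0 1)
  map_one : Y 1 = 0
  pos : ∀ η ∈ Ico (0:ℝ) 1, 0 < Y η
  contDiffOn : ContDiffOn ℝ 2 Y (Ico 0 1)
  ode : ∀ η ∈ Ioo (0:ℝ) 1,
    ν * (Y η) ^ 2 * deriv (deriv Y) η + (η ^ 2 - 1) * m * a * deriv Y η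
      - η * ((3 * m - 1) / 2) * a * Y η = 0
  boundary : ν * Y 0 * derivWithin Y (Ici 0) 0 + m * a = 0

theorem IsCroccoSolution.hasDerivWithinAt_zero {ν a m : ℝ} {Y : ℝ → ℝ}
    (hY : IsCroccoSolution ν a m Y) :
    HasDerivWithinAt Y (derivWithin Y (Ici 0) 0) (Ici 0) 0 :=
  ((hY.contDiffOn.differentiableOn two_ne_zero 0 ⟨le_rfl, one_pos⟩).mono_of_mem_nhdsWithin
    (Ico_mem_nhdsGE one_pos)).hasDerivWithinAt

theorem IsCroccoSolution.derivWithin_lt_of_lt {ν a m : ℝ} {Y₁ Y₂ : ℝ → ℝ}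
    (hν : 0 < ν) (hma : 0 < m * a)
    (h₁ : IsCroccoSolution ν a m Y₁) (h₂ : IsCroccoSolution ν a m Y₂)
    (hY₂ : 0 < Y₂ 0) (hlt : Y₂ 0 < Y₁ 0) :
    derivWithin Y₂ (Ici 0) 0 < derivWithin Y₁ (Ici 0) 0 := by
  have hd₂ : derivWithin Y₂ (Ici 0) 0 < 0 :=
    neg_of_mul_neg_right (by linarith [h₂.boundary]) (mul_pos hν hY₂).le
  have key : ν * Y₁ 0 * (derivWithin Y₁ (Ici 0) 0 - derivWithin Y₂ (Ici 0) 0)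
      = ν * -derivWithin Y₂ (Ici 0) 0 * (Y₁ 0 - Y₂ 0) := by
    linear_combination h₁.boundary - h₂.boundary
  have hpos : 0 < ν * Y₁ 0 * (derivWithin Y₁ (Ici 0) 0 - derivWithin Y₂ (Ici 0) 0) := by
    rw [key]; exact mul_pos (mul_pos hν (neg_pos.2 hd₂)) (sub_pos.2 hlt)
  linarith [pos_of_mul_pos_right hpos (mul_pos hν (hY₂.trans hlt)).le]

theorem IsCroccoSolution.deriv_deriv_lt_of_deriv_eq {ν a m x : ℝ} {Y₁ Y₂ : ℝ → ℝ}
    (hν : 0 < ν) (hma : 0 < m * a)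
    (h₁ : IsCroccoSolution ν a m Y₁) (h₂ : IsCroccoSolution ν a m Y₂) (hx : x ∈ Ioo (0:ℝ) 1)
    (hY₂ : 0 < Y₂ x) (hlt : Y₂ x < Y₁ x) (hslope : deriv Y₁ x = deriv Y₂ x)
    (hdec : deriv Y₂ x ≤ 0) (hconc : deriv (deriv Y₂) x < 0) :
    deriv (deriv Y₂) x < deriv (deriv Y₁) x :=
  crocco_contact_lt (κ := x * ((3 * m - 1) / 2) * a) (B := (1 - x ^ 2) * (m * a) * deriv Y₂ x) hν
    (mul_nonpos_of_nonneg_of_nonpos (mul_nonneg (by nlinarith [hx.1, hx.2]) hma.le) hdec) hY₂ hlt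
    (by linear_combination h₁.ode x hx - (x ^ 2 - 1) * m * a * hslope)
    (by linear_combination h₂.ode x hx) hconc

theorem IsCroccoSolution.le_of_deriv_nonpos_of_deriv_deriv_neg {ν a m : ℝ} {Y₁ Y₂ : ℝ → ℝ}
    (hν : 0 < ν) (hma : 0 < m * a)
    (h₁ : IsCroccoSolution ν a m Y₁) (h₂ : IsCroccoSolution ν a m Y₂)
    (hdec : ∀ η ∈ Ioo (0:ℝ) 1, deriv Y₂ η ≤ 0)
    (hconc : ∀ η ∈ Ioo (0:ℝ) 1, deriv (deriv Y₂) η < 0) :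
    ∀ x ∈ Icc (0:ℝ) 1, Y₁ x ≤ Y₂ x := by
  obtain ⟨x₀, hx₀, hmax⟩ := isCompact_Icc.exists_isMaxOn (nonempty_Icc.2 zero_le_one)
    (h₁.continuousOn.sub h₂.continuousOn)
  suffices hZ : (Y₁ - Y₂) x₀ ≤ 0 from fun x hx ↦ sub_nonpos.1 ((hmax hx).trans hZ)
  by_contra! hZ
  have hlt : Y₂ x₀ < Y₁ x₀ := sub_pos.1 hZ
  have hx₀1 : x₀ < 1 := hx₀.2.lt_of_ne <| by rintro rfl; simp [h₁.map_one, h₂.map_one] at hlt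
  have hY₂ : 0 < Y₂ x₀ := h₂.pos x₀ ⟨hx₀.1, hx₀1⟩
  rcases hx₀.1.eq_or_lt with rfl | hx₀0
  · have hloc : IsLocalMaxOn (Y₁ - Y₂) (Ici 0) 0 := by
      rw [IsLocalMaxOn, ← nhdsWithin_Icc_eq_nhdsGE one_pos]; exact hmax.localize
    have hslope := hloc.hasDerivWithinAt_Ici_nonpos
      (h₁.hasDerivWithinAt_zero.sub h₂.hasDerivWithinAt_zero)
    linarith [h₁.derivWithin_lt_of_lt hν hma h₂ hY₂ hlt]
  · have hx₀s : x₀ ∈ Ioo (0:ℝ) 1 := ⟨hx₀0, hx₀1⟩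
    have hC₁ := h₁.contDiffOn.mono Ioo_subset_Ico_self
    have hC₂ := h₂.contDiffOn.mono Ioo_subset_Ico_self
    have hC₁x := hC₁.contDiffAt (isOpen_Ioo.mem_nhds hx₀s)
    have hC₂x := hC₂.contDiffAt (isOpen_Ioo.mem_nhds hx₀s)
    have hloc : IsLocalMax (Y₁ - Y₂) x₀ := hmax.localize.isLocalMax (Icc_mem_nhds hx₀0 hx₀1)
    have hslope : deriv Y₁ x₀ = deriv Y₂ x₀ := by
      have := hloc.deriv_eq_zero
      rw [deriv_sub (hC₁x.differentiableAt two_ne_zero) (hC₂x.differentiableAt two_ne_zero)]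
        at this
      linarith
    have hcurv := h₁.deriv_deriv_lt_of_deriv_eq hν hma h₂ hx₀s hY₂ hlt hslope (hdec x₀ hx₀s)
      (hconc x₀ hx₀s)
    have hmaxtest := hloc.deriv_deriv_nonpos (hC₁x.continuousAt.sub hC₂x.continuousAt)
    rw [ContDiffOn.deriv_deriv_sub isOpen_Ioo hC₁ hC₂ hx₀s] at hmaxtest
    linarith

/-- Uniqueness for the degenerate Crocco boundary value problem under a
concavity-type bound `ν Y Y'' ≤ -M < 0`. -/
theorem crocco_bvp_uniqueness
    (ν a m : ℝ) (hν : 0 < ν) (ha : 0 < a) (hm : 0 < m)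
    (Y₁ Y₂ : ℝ → ℝ) (M₁ M₂ : ℝ) (hM₁ : 0 < M₁) (hM₂ : 0 < M₂)
    (hcont₁ : ContinuousOn Y₁ (Icc 0 1)) (hcont₂ : ContinuousOn Y₂ (Icc 0 1))
    (hY₁1 : Y₁ 1 = 0) (hY₂1 : Y₂ 1 = 0)
    (hpos₁ : ∀ η ∈ Ico (0:ℝ) 1, 0 < Y₁ η)
    (hpos₂ : ∀ η ∈ Ico (0:ℝ) 1, 0 < Y₂ η)
    (hC2₁ : ContDiffOn ℝ 2 Y₁ (Ico 0 1)) (hC2₂ : ContDiffOn ℝ 2 Y₂ (Ico 0 1))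
    (hode₁ : ∀ η ∈ Ioo (0:ℝ) 1,
      ν * (Y₁ η) ^ 2 * deriv (deriv Y₁) η + (η ^ 2 - 1) * m * a * deriv Y₁ η
        - η * ((3 * m - 1) / 2) * a * Y₁ η = 0)
    (hode₂ : ∀ η ∈ Ioo (0:ℝ) 1,
      ν * (Y₂ η) ^ 2 * deriv (deriv Y₂) η + (η ^ 2 - 1) * m * a * deriv Y₂ η
        - η * ((3 * m - 1) / 2) * a * Y₂ η = 0)
    (hbc₁ : ν * Y₁ 0 * derivWithin Y₁ (Ici 0) 0 + m * a = 0)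
    (hbc₂ : ν * Y₂ 0 * derivWithin Y₂ (Ici 0) 0 + m * a = 0)
    (hdec₁ : ∀ η ∈ Ioo (0:ℝ) 1, deriv Y₁ η < 0)
    (hdec₂ : ∀ η ∈ Ioo (0:ℝ) 1, deriv Y₂ η < 0)
    (hcurv₁ : ∀ η ∈ Ico (0:ℝ) 1, ν * Y₁ η * deriv (deriv Y₁) η ≤ -M₁)
    (hcurv₂ : ∀ η ∈ Ico (0:ℝ) 1, ν * Y₂ η * deriv (deriv Y₂) η ≤ -M₂) :
    EqOn Y₁ Y₂ (Icc 0 1) := by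
  have hsol₁ : IsCroccoSolution ν a m Y₁ := ⟨hcont₁, hY₁1, hpos₁, hC2₁, hode₁, hbc₁⟩
  have hsol₂ : IsCroccoSolution ν a m Y₂ := ⟨hcont₂, hY₂1, hpos₂, hC2₂, hode₂, hbc₂⟩
  have hconc {Y : ℝ → ℝ} {M : ℝ} (hM : 0 < M) (hpos : ∀ η ∈ Ico (0:ℝ) 1, 0 < Y η)
      (hcurv : ∀ η ∈ Ico (0:ℝ) 1, ν * Y η * deriv (deriv Y) η ≤ -M) :
      ∀ η ∈ Ioo (0:ℝ) 1, deriv (deriv Y) η < 0 := fun η hη ↦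
    neg_of_mul_neg_right ((hcurv η (Ioo_subset_Ico_self hη)).trans_lt (neg_neg_of_pos hM))
      (mul_pos hν (hpos η (Ioo_subset_Ico_self hη))).le
  have hma : 0 < m * a := mul_pos hm ha
  exact fun x hx ↦ le_antisymm
    (hsol₁.le_of_deriv_nonpos_of_deriv_deriv_neg hν hma hsol₂
      (fun η hη ↦ (hdec₂ η hη).le) (hconc hM₂ hpos₂ hcurv₂) x hx)
    (hsol₂.le_of_deriv_nonpos_of_deriv_deriv_neg hν hma hsol₁
      (fun η hη ↦ (hdec₁ η hη).le) (hconc hM₁ hpos₁ hcurv₁) x hx)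
end

section
/- Let Y be the solution of ν Y² Y'' + (η²-1) m a Y' - η((3m-1)/2) a Y = 0 on (0,1), Y > 0, with the bounds M₅(1-η)σ(η) ≤ Y(η) ≤ M₆(1-η)σ(η), where σ(η) = √(-ln μ(1-η)), 0 < μ < 1 and M₅, M₆ > 0. Then using the formula ν Y'(η) = -m a (1-η²)/Y(η) - ((m+1)/2) a ∫_0^η s/Y(s) ds, there exist constants M₇ ≥ M₈ > 0 such that -M₇ σ(η) ≤ Y'(η) ≤ -M₈ σ(η) for all η ∈ (0,1). -/
/-!
Since `(2σ)' = 1 / ((1 - η) σ)`, the bounds `Y ≍ (1 - η) σ` give `∫₀^η s / Y ≍ σ(η) - σ(0)` up to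
an additive `1 / σ(0)`, and `(1 - η²) / Y(η) ≍ 1 / σ(η)`. As `σ ≥ σ(0) > 0`, both terms of `ν Y'` are
`O(σ)`. Conversely the term `1 / σ` dominates `σ` while `σ ≤ 2σ(0) + 1 / σ(0)`, and beyond that the
integral term is at least a multiple of `σ`.
-/

open Set intervalIntegral

noncomputable def croccoSigma (μ η : ℝ) : ℝ := √(-Real.log (μ * (1 - η)))

section CroccoSigma

variable {μ : ℝ}

lemma croccoSigma_pos (hμ0 : 0 < μ) (hμ1 : μ < 1) {η : ℝ} (hη : η ∈ Ico (0:ℝ) 1) :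
    0 < croccoSigma μ η := by
  have hlt : μ * (1 - η) < 1 := by nlinarith [hη.1, hη.2]
  exact Real.sqrt_pos.2 (neg_pos.2 (Real.log_neg (mul_pos hμ0 (sub_pos.2 hη.2)) hlt))

lemma croccoSigma_monotoneOn (hμ0 : 0 < μ) : MonotoneOn (croccoSigma μ) (Iio 1) := by
  intro x _ y hy hxy
  have hy' : 0 < μ * (1 - y) := mul_pos hμ0 (sub_pos.2 hy)
  exact Real.sqrt_le_sqrt (neg_le_neg (Real.log_le_log hy' (by nlinarith)))

lemma continuousOn_croccoSigma (hμ0 : 0 < μ) : ContinuousOn (croccoSigma μ) (Iio 1) := by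
  intro η hη
  have hpos : μ * (1 - η) ≠ 0 := (mul_pos hμ0 (sub_pos.2 hη)).ne'
  exact ((continuousAt_const.mul (continuousAt_const.sub continuousAt_id)).log
    hpos).neg.sqrt.continuousWithinAt

lemma hasDerivAt_croccoSigma (hμ0 : 0 < μ) (hμ1 : μ < 1) {η : ℝ} (hη : η ∈ Ico (0:ℝ) 1) :
    HasDerivAt (croccoSigma μ) (2 * ((1 - η) * croccoSigma μ η))⁻¹ η := by
  have h1η : 0 < 1 - η := sub_pos.2 hη.2
  have hlin : HasDerivAt (fun t => μ * (1 - t)) (-μ) η := by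
    simpa using ((hasDerivAt_id η).const_sub 1).const_mul μ
  have hinner : HasDerivAt (fun t => -Real.log (μ * (1 - t))) (1 - η)⁻¹ η := by
    refine (hlin.log (mul_pos hμ0 h1η).ne').neg.congr_deriv ?_
    field_simp
  have hσ := croccoSigma_pos hμ0 hμ1 hη
  refine (hinner.sqrt (Real.sqrt_pos.1 hσ).ne').congr_deriv ?_
  rw [← croccoSigma]
  field_simp

lemma uIcc_zero_subset_Ico {η : ℝ} (hη : η ∈ Ico (0:ℝ) 1) : uIcc 0 η ⊆ Ico (0:ℝ) 1 := by
  rw [uIcc_of_le hη.1]; exact Icc_subset_Ico_right hη.2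

lemma intervalIntegrable_inv_croccoSigma (hμ0 : 0 < μ) (hμ1 : μ < 1) {η : ℝ}
    (hη : η ∈ Ico (0:ℝ) 1) :
    IntervalIntegrable (fun s => (croccoSigma μ s)⁻¹) MeasureTheory.volume 0 η :=
  (((continuousOn_croccoSigma hμ0).mono fun _ hs => (uIcc_zero_subset_Ico hη hs).2).inv₀
    fun _ hs => (croccoSigma_pos hμ0 hμ1 (uIcc_zero_subset_Ico hη hs)).ne').intervalIntegrable

lemma intervalIntegrable_inv_sub_mul_croccoSigma (hμ0 : 0 < μ) (hμ1 : μ < 1) {η : ℝ}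
    (hη : η ∈ Ico (0:ℝ) 1) :
    IntervalIntegrable (fun s => ((1 - s) * croccoSigma μ s)⁻¹) MeasureTheory.volume 0 η :=
  (((continuousOn_const.sub continuousOn_id).mul ((continuousOn_croccoSigma hμ0).mono
    fun _ hs => (uIcc_zero_subset_Ico hη hs).2)).inv₀
    fun _ hs => (mul_pos (sub_pos.2 (uIcc_zero_subset_Ico hη hs).2)
      (croccoSigma_pos hμ0 hμ1 (uIcc_zero_subset_Ico hη hs))).ne').intervalIntegrable

lemma integral_inv_sub_mul_croccoSigma (hμ0 : 0 < μ) (hμ1 : μ < 1) {η : ℝ}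
    (hη : η ∈ Ico (0:ℝ) 1) :
    ∫ s in (0:ℝ)..η, ((1 - s) * croccoSigma μ s)⁻¹ =
      2 * (croccoSigma μ η - croccoSigma μ 0) := by
  rw [integral_eq_sub_of_hasDerivAt (f := fun t => 2 * croccoSigma μ t)
    (fun s hs => ((hasDerivAt_croccoSigma hμ0 hμ1 (uIcc_zero_subset_Ico hη hs)).const_mul
      2).congr_deriv (by rw [mul_inv, ← mul_assoc, mul_inv_cancel₀ two_ne_zero, one_mul]))
    (intervalIntegrable_inv_sub_mul_croccoSigma hμ0 hμ1 hη)]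
  ring

/-- `s / ((1 - s) σ) = 1 / ((1 - s) σ) - 1 / σ`, and `1 / σ ≤ 1 / σ(0)` since `σ` increases. -/
lemma integral_div_sub_mul_croccoSigma_bounds (hμ0 : 0 < μ) (hμ1 : μ < 1) {η : ℝ}
    (hη : η ∈ Ico (0:ℝ) 1) :
    2 * (croccoSigma μ η - croccoSigma μ 0) - η / croccoSigma μ 0 ≤
        ∫ s in (0:ℝ)..η, s / ((1 - s) * croccoSigma μ s) ∧
      ∫ s in (0:ℝ)..η, s / ((1 - s) * croccoSigma μ s) ≤
        2 * (croccoSigma μ η - croccoSigma μ 0) := by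
  have hσ₀ := croccoSigma_pos hμ0 hμ1 (left_mem_Ico.2 one_pos)
  have hsplit : ∫ s in (0:ℝ)..η, s / ((1 - s) * croccoSigma μ s) =
      2 * (croccoSigma μ η - croccoSigma μ 0) - ∫ s in (0:ℝ)..η, (croccoSigma μ s)⁻¹ := by
    rw [← integral_inv_sub_mul_croccoSigma hμ0 hμ1 hη, ← integral_sub
      (intervalIntegrable_inv_sub_mul_croccoSigma hμ0 hμ1 hη)
      (intervalIntegrable_inv_croccoSigma hμ0 hμ1 hη)]
    refine integral_congr fun s hs => ?_
    have h1s : 1 - s ≠ 0 := (sub_pos.2 (uIcc_zero_subset_Ico hη hs).2).ne'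
    have hσs := (croccoSigma_pos hμ0 hμ1 (uIcc_zero_subset_Ico hη hs)).ne'
    field_simp
    ring
  have hnonneg : 0 ≤ ∫ s in (0:ℝ)..η, (croccoSigma μ s)⁻¹ :=
    integral_nonneg hη.1 fun s hs =>
      inv_nonneg.2 (croccoSigma_pos hμ0 hμ1 ⟨hs.1, hs.2.trans_lt hη.2⟩).le
  have hle : ∫ s in (0:ℝ)..η, (croccoSigma μ s)⁻¹ ≤ η / croccoSigma μ 0 := by
    calc ∫ s in (0:ℝ)..η, (croccoSigma μ s)⁻¹ ≤ ∫ _ in (0:ℝ)..η, (croccoSigma μ 0)⁻¹ :=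
          integral_mono_on hη.1 (intervalIntegrable_inv_croccoSigma hμ0 hμ1 hη)
            intervalIntegrable_const fun s hs => inv_anti₀ hσ₀
              (croccoSigma_monotoneOn hμ0 (by norm_num) (hs.2.trans_lt hη.2) hs.1)
      _ = η / croccoSigma μ 0 := by simp [div_eq_mul_inv]
  constructor <;> linarith

end CroccoSigma

lemma integral_div_bounds_of_mul_le_of_le_mul {f g Y : ℝ → ℝ} {a b M₅ M₆ : ℝ} (hab : a ≤ b)
    (hM₅ : 0 < M₅) (hf : ContinuousOn f (Icc a b)) (hg : ContinuousOn g (Icc a b))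
    (hY : ContinuousOn Y (Icc a b)) (hf0 : ∀ x ∈ Icc a b, 0 ≤ f x)
    (hg0 : ∀ x ∈ Icc a b, 0 < g x)
    (hbounds : ∀ x ∈ Icc a b, M₅ * g x ≤ Y x ∧ Y x ≤ M₆ * g x) :
    (∫ x in a..b, f x / g x) / M₆ ≤ ∫ x in a..b, f x / Y x ∧
      ∫ x in a..b, f x / Y x ≤ (∫ x in a..b, f x / g x) / M₅ := by
  have hYpos : ∀ x ∈ Icc a b, 0 < Y x := fun x hx =>
    (mul_pos hM₅ (hg0 x hx)).trans_le (hbounds x hx).1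
  have hfg := (hf.div hg fun x hx => (hg0 x hx).ne').intervalIntegrable_of_Icc
    (μ := MeasureTheory.volume) hab
  have hfY := (hf.div hY fun x hx => (hYpos x hx).ne').intervalIntegrable_of_Icc
    (μ := MeasureTheory.volume) hab
  rw [← integral_div, ← integral_div]
  constructor
  · refine integral_mono_on hab (hfg.div_const _) hfY fun x hx => ?_
    rw [div_div]
    exact div_le_div_of_nonneg_left (hf0 x hx) (hYpos x hx) (by linarith [(hbounds x hx).2])
  · refine integral_mono_on hab hfY (hfg.div_const _) fun x hx => ?_
    rw [div_div]
    exact div_le_div_of_nonneg_left (hf0 x hx) (mul_pos (hg0 x hx) hM₅)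
      (by linarith [(hbounds x hx).1])

lemma mul_one_sub_sq_div_bounds {c η s y M₅ M₆ : ℝ} (hc : 0 ≤ c) (hη : η ∈ Ico (0:ℝ) 1)
    (hs : 0 < s) (hM₅ : 0 < M₅) (hy : M₅ * (1 - η) * s ≤ y ∧ y ≤ M₆ * (1 - η) * s) :
    c / M₆ / s ≤ c * (1 - η ^ 2) / y ∧ c * (1 - η ^ 2) / y ≤ 2 * c / M₅ / s := by
  obtain ⟨hη0, hη1⟩ := hη
  have h1η : 0 < 1 - η := sub_pos.2 hη1
  have hy0 : 0 < y := (by positivity : 0 < M₅ * (1 - η) * s).trans_le hy.1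
  have hM₆ : 0 < M₆ := by
    by_contra! h
    nlinarith [mul_nonpos_of_nonpos_of_nonneg h (mul_pos h1η hs).le]
  rw [div_div, div_div, div_le_div_iff₀ (by positivity) hy0, div_le_div_iff₀ hy0 (by positivity)]
  constructor
  · nlinarith [mul_le_mul_of_nonneg_left hy.2 hc, mul_nonneg (mul_nonneg hc hM₆.le)
      (mul_nonneg (mul_nonneg hη0 h1η.le) hs.le)]
  · nlinarith [mul_le_mul_of_nonneg_left hy.1 (mul_nonneg hc (by linarith : (0:ℝ) ≤ 1 + η)),
      mul_nonneg (mul_nonneg hc (mul_nonneg hM₅.le hs.le)) h1η.le]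

lemma neg_mul_le_of_mul_eq_neg_sub {ν P Q R σ₀ s T I d : ℝ} (hν : 0 < ν) (hσ₀ : 0 < σ₀)
    (hs : σ₀ ≤ s) (hP : 0 ≤ P) (hR : 0 ≤ R) (hT : T ≤ P / s) (hI : I ≤ Q * s)
    (hd : ν * d = -T - R * I) :
    -((P / σ₀ ^ 2 + R * Q) / ν) * s ≤ d := by
  have hs0 : 0 < s := hσ₀.trans_le hs
  have hPs : P / s ≤ P / σ₀ ^ 2 * s := by
    rw [div_mul_eq_mul_div, div_le_div_iff₀ hs0 (by positivity)]
    nlinarith [mul_le_mul_of_nonneg_left (mul_le_mul hs hs hσ₀.le hs0.le) hP]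
  refine le_of_mul_le_mul_left ?_ hν
  calc ν * (-((P / σ₀ ^ 2 + R * Q) / ν) * s) = -(P / σ₀ ^ 2 * s) - R * (Q * s) := by
        field_simp
        ring
    _ ≤ ν * d := by nlinarith [mul_le_mul_of_nonneg_left hI hR]

lemma le_neg_mul_of_mul_eq_neg_sub {ν P Q R C s T I d : ℝ} (hν : 0 < ν) (hC : 0 < C)
    (hs : 0 < s) (hP : 0 ≤ P) (hR : 0 ≤ R) (hT : P / s ≤ T) (hI0 : 0 ≤ I)
    (hI : C < s → Q * s ≤ I) (hd : ν * d = -T - R * I) :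
    d ≤ -(min (R * Q) (P / C ^ 2) / ν) * s := by
  refine le_of_mul_le_mul_left ?_ hν
  have hRI : 0 ≤ R * I := mul_nonneg hR hI0
  have hPs : 0 ≤ P / s := by positivity
  rw [show ν * (-(min (R * Q) (P / C ^ 2) / ν) * s) = -(min (R * Q) (P / C ^ 2) * s) by
    field_simp]
  rcases le_or_gt s C with hsC | hCs
  · have hmin : min (R * Q) (P / C ^ 2) * s ≤ P / C ^ 2 * s :=
      mul_le_mul_of_nonneg_right (min_le_right _ _) hs.le
    have hPC : P / C ^ 2 * s ≤ P / s := by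
      rw [div_mul_eq_mul_div, div_le_div_iff₀ (by positivity) hs]
      nlinarith [mul_le_mul_of_nonneg_left (mul_le_mul hsC hsC hs.le hC.le) hP]
    linarith
  · have hmin : min (R * Q) (P / C ^ 2) * s ≤ R * Q * s :=
      mul_le_mul_of_nonneg_right (min_le_left _ _) hs.le
    have hRQ : R * Q * s ≤ R * I := by
      rw [mul_assoc]; exact mul_le_mul_of_nonneg_left (hI hCs) hR
    linarith

lemma integral_div_bounds_of_croccoSigma_bounds {Y : ℝ → ℝ} {μ M₅ M₆ η : ℝ} (hμ0 : 0 < μ)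
    (hμ1 : μ < 1) (hM₅ : 0 < M₅) (hM₆ : 0 < M₆) (hY : ContinuousOn Y (Ico 0 1))
    (hbounds : ∀ η ∈ Ico (0:ℝ) 1,
      M₅ * (1 - η) * croccoSigma μ η ≤ Y η ∧ Y η ≤ M₆ * (1 - η) * croccoSigma μ η)
    (hη : η ∈ Ico (0:ℝ) 1) :
    0 ≤ ∫ s in (0:ℝ)..η, s / Y s ∧
      ∫ s in (0:ℝ)..η, s / Y s ≤ 2 / M₅ * croccoSigma μ η ∧
      (2 * croccoSigma μ 0 + 1 / croccoSigma μ 0 < croccoSigma μ η →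
        1 / M₆ * croccoSigma μ η ≤ ∫ s in (0:ℝ)..η, s / Y s) := by
  have hsub : Icc 0 η ⊆ Ico (0:ℝ) 1 := Icc_subset_Ico_right hη.2
  have hσ₀ := croccoSigma_pos hμ0 hμ1 (left_mem_Ico.2 one_pos)
  have hσ₀η : croccoSigma μ 0 ≤ croccoSigma μ η :=
    croccoSigma_monotoneOn hμ0 (by norm_num) hη.2 hη.1
  obtain ⟨hw_low, hw_up⟩ := integral_div_sub_mul_croccoSigma_bounds hμ0 hμ1 hη
  obtain ⟨hI_low, hI_up⟩ := integral_div_bounds_of_mul_le_of_le_mul (f := fun s => s)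
    (g := fun s => (1 - s) * croccoSigma μ s) hη.1 hM₅
    continuousOn_id ((continuousOn_const.sub continuousOn_id).mul
      ((continuousOn_croccoSigma hμ0).mono fun s hs => (hsub hs).2))
    (hY.mono hsub) (fun s hs => hs.1)
    (fun s hs => mul_pos (sub_pos.2 (hsub hs).2) (croccoSigma_pos hμ0 hμ1 (hsub hs)))
    fun s hs => by simpa only [mul_assoc] using hbounds s (hsub hs)
  have hw_nonneg : 0 ≤ ∫ s in (0:ℝ)..η, s / ((1 - s) * croccoSigma μ s) :=
    integral_nonneg hη.1 fun s hs => div_nonneg hs.1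
      (mul_pos (sub_pos.2 (hsub hs).2) (croccoSigma_pos hμ0 hμ1 (hsub hs))).le
  refine ⟨(div_nonneg hw_nonneg hM₆.le).trans hI_low, ?_, fun hC => ?_⟩
  · calc ∫ s in (0:ℝ)..η, s / Y s ≤ 2 * (croccoSigma μ η - croccoSigma μ 0) / M₅ :=
          hI_up.trans (by gcongr)
      _ ≤ 2 / M₅ * croccoSigma μ η := by
          rw [div_mul_eq_mul_div]; gcongr; linarith
  · have hη₀ : η / croccoSigma μ 0 ≤ 1 / croccoSigma μ 0 := by gcongr; exact hη.2.le
    calc 1 / M₆ * croccoSigma μ η ≤ 1 / M₆ * ∫ s in (0:ℝ)..η, s / ((1 - s) * croccoSigma μ s) := by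
          gcongr; linarith
      _ ≤ ∫ s in (0:ℝ)..η, s / Y s := by rwa [one_div_mul_eq_div]

theorem crocco_deriv_two_sided_bounds_general
    (Y : ℝ → ℝ) (ν a m μ M₅ M₆ : ℝ)
    (hν : 0 < ν) (ha : 0 < a) (hm : 0 < m)
    (hμ0 : 0 < μ) (hμ1 : μ < 1) (hM₅ : 0 < M₅) (hM₆ : 0 < M₆)
    (σ : ℝ → ℝ) (hσ : ∀ η, σ η = Real.sqrt (-Real.log (μ * (1 - η))))
    (hC2 : ContDiffOn ℝ 2 Y (Ico 0 1))
    (hbounds : ∀ η ∈ Ico (0:ℝ) 1,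
      M₅ * (1 - η) * σ η ≤ Y η ∧ Y η ≤ M₆ * (1 - η) * σ η)
    (hderiv : ∀ η ∈ Ico (0:ℝ) 1,
      ν * deriv Y η =
        -(m * a * (1 - η ^ 2) / Y η)
          - ((m + 1) / 2) * a * ∫ s in (0:ℝ)..η, s / Y s) :
    ∃ M₇ M₈ : ℝ, 0 < M₈ ∧ M₈ ≤ M₇ ∧
      ∀ η ∈ Ioo (0:ℝ) 1, -M₇ * σ η ≤ deriv Y η ∧ deriv Y η ≤ -M₈ * σ η := by
  obtain rfl : σ = croccoSigma μ := funext hσ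
  set σ₀ := croccoSigma μ 0
  have hσ₀ : 0 < σ₀ := croccoSigma_pos hμ0 hμ1 (left_mem_Ico.2 one_pos)
  set K₇ := (2 * (m * a) / M₅ / σ₀ ^ 2 + (m + 1) / 2 * a * (2 / M₅)) / ν
  set K₈ := min ((m + 1) / 2 * a * (1 / M₆)) (m * a / M₆ / (2 * σ₀ + 1 / σ₀) ^ 2) / ν
  refine ⟨max K₇ K₈, K₈, by positivity, le_max_right _ _, fun η hη => ?_⟩
  have hηI : η ∈ Ico (0:ℝ) 1 := Ioo_subset_Ico_self hη
  have hση : 0 < croccoSigma μ η := croccoSigma_pos hμ0 hμ1 hηI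
  obtain ⟨hI_nonneg, hI_le, hI_ge⟩ :=
    integral_div_bounds_of_croccoSigma_bounds hμ0 hμ1 hM₅ hM₆ hC2.continuousOn hbounds hηI
  obtain ⟨hT_ge, hT_le⟩ :=
    mul_one_sub_sq_div_bounds (c := m * a) (by positivity) hηI hση hM₅ (hbounds η hηI)
  constructor
  · calc -(max K₇ K₈) * croccoSigma μ η ≤ -K₇ * croccoSigma μ η := by
          gcongr; exact le_max_left _ _
      _ ≤ deriv Y η := neg_mul_le_of_mul_eq_neg_sub hν hσ₀
          (croccoSigma_monotoneOn hμ0 (by norm_num) hη.2 hη.1.le) (by positivity)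
          (by positivity) hT_le hI_le (hderiv η hηI)
  · exact le_neg_mul_of_mul_eq_neg_sub hν (by positivity) hση (by positivity) (by positivity)
      hT_ge hI_nonneg hI_ge (hderiv η hηI)

/-- Two-sided bounds `-M₇σ ≤ Y' ≤ -M₈σ` for the Crocco self-similar profile. -/
theorem crocco_deriv_two_sided_bounds
    (Y : ℝ → ℝ) (ν a m μ M₅ M₆ : ℝ)
    (hν : 0 < ν) (ha : 0 < a) (hm : 0 < m)
    (hμ0 : 0 < μ) (hμ1 : μ < 1) (hM₅ : 0 < M₅) (hM₆ : 0 < M₆)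
    (σ : ℝ → ℝ) (hσ : ∀ η, σ η = Real.sqrt (-Real.log (μ * (1 - η))))
    (hC2 : ContDiffOn ℝ 2 Y (Ico 0 1))
    (hpos : ∀ η ∈ Ico (0:ℝ) 1, 0 < Y η)
    (hode : ∀ η ∈ Ioo (0:ℝ) 1,
      ν * (Y η) ^ 2 * deriv (deriv Y) η + (η ^ 2 - 1) * m * a * deriv Y η
        - η * ((3 * m - 1) / 2) * a * Y η = 0)
    (hbounds : ∀ η ∈ Ico (0:ℝ) 1,
      M₅ * (1 - η) * σ η ≤ Y η ∧ Y η ≤ M₆ * (1 - η) * σ η)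
    (hderiv : ∀ η ∈ Ico (0:ℝ) 1,
      ν * deriv Y η =
        -(m * a * (1 - η ^ 2) / Y η)
          - ((m + 1) / 2) * a * ∫ s in (0:ℝ)..η, s / Y s) :
    ∃ M₇ M₈ : ℝ, 0 < M₈ ∧ M₈ ≤ M₇ ∧
      ∀ η ∈ Ioo (0:ℝ) 1, -M₇ * σ η ≤ deriv Y η ∧ deriv Y η ≤ -M₈ * σ η :=
  crocco_deriv_two_sided_bounds_general Y ν a m μ M₅ M₆ hν ha hm hμ0 hμ1 hM₅ hM₆ σ hσ hC2 hbounds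
    hderiv
end

section
/- Let β > 0 and let f₁, f₂ be two solutions of f''' + f f'' + β(1-(f')²) = 0 on [0,∞) with the same data f(0) = f₀, f'(0) = f₁ ∈ [0,1), f' → 1 at infinity, 0 < f' < 1 on (0,∞) and f'' > 0 on [0,∞). Then f₁ = f₂. -/
/-!
Two solutions with the same `f 0` and `f' 0` are compared in Crocco variables: since `f'' > 0`,
the velocity `u = f'` can serve as independent variable on `[f'(0), 1)`, and the shear `p = f''`
and the stream function `q = f`, as functions of `u`, solve
`p' = -q - β (1 - u²) / p`, `q' = u / p`.
If `p₁ > p₂` at `u = f'(0)`, then `q₁ - q₂` decreases from `0` as long as `p₁ > p₂`, which in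
turn makes `p₁ - p₂` increase, so `p₁ - p₂` never drops below its initial value. But `f'' → 0`
at infinity forces `p₁ → 0` as `u → 1`. Hence `f''(0)` agrees as well, and the two solutions
coincide by uniqueness for the initial value problem.
-/

open Set Filter Topology Function

theorem hasDerivAt_iterate_deriv {𝕜 F : Type*} [NontriviallyNormedField 𝕜]
    [NormedAddCommGroup F] [NormedSpace 𝕜 F] {f : 𝕜 → F} {n : ℕ} (hf : ContDiff 𝕜 n f) {k : ℕ}
    (hk : k < n) (x : 𝕜) : HasDerivAt (deriv^[k] f) (deriv^[k + 1] f x) x := by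
  obtain ⟨m, rfl⟩ := Nat.exists_eq_add_of_lt hk
  have : ContDiff 𝕜 (m + 1 : ℕ) (deriv^[k] f) :=
    ContDiff.iterate_deriv' _ k (by rwa [show m + 1 + k = k + m + 1 by omega])
  rw [iterate_succ_apply']
  exact (this.differentiable (by simp)).differentiableAt.hasDerivAt

theorem eqOn_Ici_of_hasDerivAt_of_locallyLipschitz {E : Type*} [NormedAddCommGroup E]
    [NormedSpace ℝ E] {v : E → E} (hv : LocallyLipschitz v) {y₁ y₂ : ℝ → E} {a : ℝ}
    (h₁ : ∀ t ≥ a, HasDerivAt y₁ (v (y₁ t)) t) (h₂ : ∀ t ≥ a, HasDerivAt y₂ (v (y₂ t)) t)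
    (ha : y₁ a = y₂ a) : EqOn y₁ y₂ (Ici a) := by
  intro T hT
  have hc₁ : ContinuousOn y₁ (Icc a T) := fun t ht ↦ (h₁ t ht.1).continuousAt.continuousWithinAt
  have hc₂ : ContinuousOn y₂ (Icc a T) := fun t ht ↦ (h₂ t ht.1).continuousAt.continuousWithinAt
  obtain ⟨K, hK⟩ := hv.locallyLipschitzOn.exists_lipschitzOnWith_of_compact
    ((isCompact_Icc.image_of_continuousOn hc₁).union (isCompact_Icc.image_of_continuousOn hc₂))
  exact ODE_solution_unique_of_mem_Icc_right (v := fun _ ↦ v) (fun _ _ ↦ hK)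
    hc₁ (fun t ht ↦ (h₁ t ht.1).hasDerivWithinAt)
    (fun t ht ↦ .inl (mem_image_of_mem _ ⟨ht.1, ht.2.le⟩))
    hc₂ (fun t ht ↦ (h₂ t ht.1).hasDerivWithinAt)
    (fun t ht ↦ .inr (mem_image_of_mem _ ⟨ht.1, ht.2.le⟩))
    ha ⟨hT, le_rfl⟩

theorem tendsto_atTop_of_tendsto_deriv {f : ℝ → ℝ} (hf : Differentiable ℝ f) {c : ℝ}
    (hc : 0 < c) (h : Tendsto (deriv f) atTop (𝓝 c)) : Tendsto f atTop atTop := by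
  obtain ⟨Z, hZ⟩ := eventually_atTop.1 (h.eventually (eventually_ge_nhds (half_lt_self hc)))
  have hgrowth : ∀ z ≥ Z, c / 2 * (z - Z) + f Z ≤ f z := fun z hz ↦ by
    have := (convex_Ici Z).mul_sub_le_image_sub_of_le_deriv hf.continuous.continuousOn
      hf.differentiableOn (fun x hx ↦ hZ x (interior_subset hx)) Z self_mem_Ici z hz hz
    linarith
  refine tendsto_atTop_mono' _ (eventually_atTop.2 ⟨Z, hgrowth⟩) ?_
  exact tendsto_atTop_add_const_right _ _
    ((tendsto_atTop_add_const_right _ _ tendsto_id).const_mul_atTop (half_pos hc))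

theorem tendsto_zero_of_hasDerivAt_of_antitoneOn {φ φ' : ℝ → ℝ} {Z C : ℝ}
    (hφ : ∀ z, HasDerivAt φ (φ' z) z) (hanti : AntitoneOn φ' (Ici Z))
    (hnonneg : ∀ z ≥ Z, 0 ≤ φ' z) (hbdd : ∀ z ≥ Z, φ z ≤ C) : Tendsto φ' atTop (𝓝 0) := by
  refine tendsto_order.2 ⟨fun a ha ↦ eventually_atTop.2 ⟨Z, fun z hz ↦ ha.trans_le (hnonneg z hz)⟩,
    fun ε hε ↦ ?_⟩
  obtain ⟨z₁, hz₁, hsmall⟩ : ∃ z₁ ≥ Z, φ' z₁ < ε := by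
    by_contra! hlarge
    set z := Z + (|C - φ Z| + 1) / ε
    have hz : Z ≤ z := le_add_of_nonneg_right (by positivity)
    have hgrowth := (convex_Ici Z).mul_sub_le_image_sub_of_le_deriv
      (fun x _ ↦ (hφ x).continuousAt.continuousWithinAt)
      (fun x _ ↦ (hφ x).differentiableAt.differentiableWithinAt)
      (fun x hx ↦ by rw [(hφ x).deriv]; exact hlarge x (interior_subset hx)) Z self_mem_Ici z hz hz
    have hε' : ε * (z - Z) = |C - φ Z| + 1 := by simp only [z]; field_simp; ring
    linarith [le_abs_self (C - φ Z), hbdd z hz]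
  exact eventually_atTop.2 ⟨z₁, fun z hz ↦ (hanti hz₁ (hz₁.trans hz) hz).trans_lt hsmall⟩

structure IsCroccoSolution_s16 (β a b : ℝ) (p q : ℝ → ℝ) : Prop where
  continuousOn_shear : ContinuousOn p (Ico a b)
  continuousOn_stream : ContinuousOn q (Ico a b)
  shear_pos : ∀ u ∈ Ioo a b, 0 < p u
  hasDerivAt_shear : ∀ u ∈ Ioo a b, HasDerivAt p (-q u - β * (1 - u ^ 2) / p u) u
  hasDerivAt_stream : ∀ u ∈ Ioo a b, HasDerivAt q (u / p u) u

namespace IsCroccoSolution_s16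

variable {β a b : ℝ} {p₁ q₁ p₂ q₂ : ℝ → ℝ}

theorem sub_le_sub_of_lt (h₁ : IsCroccoSolution_s16 β a b p₁ q₁) (h₂ : IsCroccoSolution_s16 β a b p₂ q₂)
    (hβ : 0 ≤ β) (ha : 0 ≤ a) (hb : b ≤ 1) (hq : q₁ a = q₂ a) {c : ℝ} (hac : a ≤ c) (hcb : c < b)
    (hlt : ∀ u ∈ Ioo a c, p₂ u < p₁ u) : p₁ a - p₂ a ≤ p₁ c - p₂ c := by
  have hIcc : Icc a c ⊆ Ico a b := Icc_subset_Ico_right hcb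
  have hIoo : Ioo a c ⊆ Ioo a b := Ioo_subset_Ioo_right hcb.le
  have hinv : ∀ u ∈ Ioo a c, ∀ r ≥ 0, r / p₁ u ≤ r / p₂ u := fun u hu r hr ↦
    div_le_div_of_nonneg_left hr (h₂.shear_pos u (hIoo hu)) (hlt u hu).le
  have hstream : AntitoneOn (fun u ↦ q₁ u - q₂ u) (Icc a c) := by
    refine antitoneOn_of_hasDerivWithinAt_nonpos (f' := fun u ↦ u / p₁ u - u / p₂ u)
      (convex_Icc a c) ((h₁.continuousOn_stream.sub h₂.continuousOn_stream).mono hIcc)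
      (fun u hu ↦ ?_) fun u hu ↦ ?_ <;> rw [interior_Icc] at hu
    · exact ((h₁.hasDerivAt_stream u (hIoo hu)).sub
        (h₂.hasDerivAt_stream u (hIoo hu))).hasDerivWithinAt
    · linarith [hinv u hu u (ha.trans hu.1.le)]
  have hshear : MonotoneOn (fun u ↦ p₁ u - p₂ u) (Icc a c) := by
    refine monotoneOn_of_hasDerivWithinAt_nonneg
      (f' := fun u ↦ (-q₁ u - β * (1 - u ^ 2) / p₁ u) - (-q₂ u - β * (1 - u ^ 2) / p₂ u))
      (convex_Icc a c) ((h₁.continuousOn_shear.sub h₂.continuousOn_shear).mono hIcc)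
      (fun u hu ↦ ?_) fun u hu ↦ ?_ <;> rw [interior_Icc] at hu
    · exact ((h₁.hasDerivAt_shear u (hIoo hu)).sub
        (h₂.hasDerivAt_shear u (hIoo hu))).hasDerivWithinAt
    · have hu1 : u ≤ 1 := (hu.2.trans hcb).le.trans hb
      have hstream_le : q₁ u - q₂ u ≤ q₁ a - q₂ a :=
        hstream (left_mem_Icc.2 hac) (Ioo_subset_Icc_self hu) hu.1.le
      have hβu := hinv u hu (β * (1 - u ^ 2)) (mul_nonneg hβ (by nlinarith [ha.trans hu.1.le]))
      linarith
  exact hshear (left_mem_Icc.2 hac) (right_mem_Icc.2 hac) hac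

theorem sub_le_sub (h₁ : IsCroccoSolution_s16 β a b p₁ q₁) (h₂ : IsCroccoSolution_s16 β a b p₂ q₂)
    (hβ : 0 ≤ β) (ha : 0 ≤ a) (hb : b ≤ 1) (hq : q₁ a = q₂ a) (hp : p₂ a < p₁ a) {u : ℝ}
    (hu : u ∈ Ico a b) : p₁ a - p₂ a ≤ p₁ u - p₂ u := by
  have hlt : ∀ u ∈ Ico a b, p₂ u < p₁ u := by
    by_contra! ⟨u₁, hu₁, hle⟩
    have hsub : Icc a u₁ ⊆ Ico a b := Icc_subset_Ico_right hu₁.2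
    have hclosed : IsClosed (Icc a u₁ ∩ (fun u ↦ p₁ u - p₂ u) ⁻¹' Iic 0) :=
      ((h₁.continuousOn_shear.sub h₂.continuousOn_shear).mono hsub).preimage_isClosed_of_isClosed
        isClosed_Icc isClosed_Iic
    obtain ⟨c, ⟨hc, hcle⟩, hleast⟩ := (isCompact_Icc.of_isClosed_subset hclosed
      inter_subset_left).exists_isLeast ⟨u₁, right_mem_Icc.2 hu₁.1, by simpa using hle⟩
    have hpos : ∀ u ∈ Ioo a c, p₂ u < p₁ u := fun u hu ↦ by
      by_contra! hle'
      exact (hleast ⟨⟨hu.1.le, hu.2.le.trans hc.2⟩, by simpa using hle'⟩).not_gt hu.2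
    have := h₁.sub_le_sub_of_lt h₂ hβ ha hb hq hc.1 (hsub hc).2 hpos
    simp only [mem_preimage, mem_Iic] at hcle
    linarith
  exact h₁.sub_le_sub_of_lt h₂ hβ ha hb hq hu.1 hu.2 fun v hv ↦ hlt v ⟨hv.1.le, hv.2.trans hu.2⟩

end IsCroccoSolution_s16

namespace FalknerSkan

def vectorField (β : ℝ) (y : ℝ × ℝ × ℝ) : ℝ × ℝ × ℝ :=
  (y.2.1, y.2.2, -(y.1 * y.2.2) - β * (1 - y.2.1 ^ 2))

theorem contDiff_vectorField (β : ℝ) : ContDiff ℝ 1 (vectorField β) := by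
  unfold vectorField
  fun_prop

noncomputable def secondJet (f : ℝ → ℝ) (z : ℝ) : ℝ × ℝ × ℝ := (f z, deriv f z, deriv^[2] f z)

theorem hasDerivAt_secondJet {β : ℝ} {f : ℝ → ℝ} (hf : ContDiff ℝ 3 f) {z : ℝ}
    (hode : deriv^[3] f z + f z * deriv^[2] f z + β * (1 - deriv f z ^ 2) = 0) :
    HasDerivAt (secondJet f) (vectorField β (secondJet f z)) z := by
  refine (hasDerivAt_iterate_deriv hf (k := 0) (by norm_num) z).prodMk
    ((hasDerivAt_iterate_deriv hf (k := 1) (by norm_num) z).prodMk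
    ((hasDerivAt_iterate_deriv hf (k := 2) (by norm_num) z).congr_deriv ?_))
  simp only [secondJet]
  linarith

theorem eqOn_Ici_of_secondJet_eq {β : ℝ} {f g : ℝ → ℝ} (hf : ContDiff ℝ 3 f)
    (hg : ContDiff ℝ 3 g)
    (hodef : ∀ z ≥ (0:ℝ), deriv^[3] f z + f z * deriv^[2] f z + β * (1 - deriv f z ^ 2) = 0)
    (hodeg : ∀ z ≥ (0:ℝ), deriv^[3] g z + g z * deriv^[2] g z + β * (1 - deriv g z ^ 2) = 0)
    (h0 : secondJet f 0 = secondJet g 0) : EqOn f g (Ici 0) := fun _ hz ↦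
  congrArg Prod.fst <| eqOn_Ici_of_hasDerivAt_of_locallyLipschitz
    (contDiff_vectorField β).locallyLipschitz (fun t ht ↦ hasDerivAt_secondJet hf (hodef t ht))
    (fun t ht ↦ hasDerivAt_secondJet hg (hodeg t ht)) h0 hz

structure IsSolution (β : ℝ) (f : ℝ → ℝ) : Prop where
  contDiff : ContDiff ℝ 3 f
  ode : ∀ z ≥ (0:ℝ), deriv^[3] f z + f z * deriv^[2] f z + β * (1 - deriv f z ^ 2) = 0
  tendsto_deriv : Tendsto (deriv f) atTop (𝓝 1)
  deriv_mem_Ioo : ∀ z > (0:ℝ), deriv f z ∈ Ioo 0 1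
  deriv2_pos : ∀ z ≥ (0:ℝ), 0 < deriv^[2] f z

noncomputable def croccoTime (f : ℝ → ℝ) : ℝ → ℝ := invFunOn (deriv f) (Ici 0)

noncomputable def croccoShear (f : ℝ → ℝ) (u : ℝ) : ℝ := deriv^[2] f (croccoTime f u)

noncomputable def croccoStream (f : ℝ → ℝ) (u : ℝ) : ℝ := f (croccoTime f u)

namespace IsSolution

variable {β : ℝ} {f : ℝ → ℝ}

theorem hasDerivAt (hf : IsSolution β f) (z : ℝ) : HasDerivAt f (deriv f z) z :=
  hasDerivAt_iterate_deriv hf.contDiff (k := 0) (by norm_num) z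

theorem hasDerivAt_deriv (hf : IsSolution β f) (z : ℝ) :
    HasDerivAt (deriv f) (deriv^[2] f z) z :=
  hasDerivAt_iterate_deriv hf.contDiff (k := 1) (by norm_num) z

theorem hasDerivAt_deriv2 (hf : IsSolution β f) (z : ℝ) :
    HasDerivAt (deriv^[2] f) (deriv^[3] f z) z :=
  hasDerivAt_iterate_deriv hf.contDiff (k := 2) (by norm_num) z

theorem strictMonoOn_deriv (hf : IsSolution β f) : StrictMonoOn (deriv f) (Ici 0) :=
  strictMonoOn_of_hasDerivWithinAt_pos (convex_Ici 0)
    (fun z _ ↦ (hf.hasDerivAt_deriv z).continuousAt.continuousWithinAt)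
    (fun z _ ↦ (hf.hasDerivAt_deriv z).hasDerivWithinAt)
    fun z hz ↦ hf.deriv2_pos z (interior_subset hz)

theorem deriv_zero_nonneg (hf : IsSolution β f) : 0 ≤ deriv f 0 :=
  ge_of_tendsto ((hf.hasDerivAt_deriv 0).continuousAt.tendsto.mono_left nhdsWithin_le_nhds)
    (eventually_nhdsWithin_of_forall (s := Ioi 0) fun z hz ↦ (hf.deriv_mem_Ioo z hz).1.le)

theorem deriv_lt_one (hf : IsSolution β f) {z : ℝ} (hz : 0 ≤ z) : deriv f z < 1 :=
  (hf.strictMonoOn_deriv hz (by simp; linarith) (lt_add_one z)).trans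
    (hf.deriv_mem_Ioo (z + 1) (by linarith)).2

theorem bijOn_deriv (hf : IsSolution β f) : BijOn (deriv f) (Ici 0) (Ico (deriv f 0) 1) := by
  refine ⟨fun z hz ↦ ⟨hf.strictMonoOn_deriv.monotoneOn self_mem_Ici hz hz, hf.deriv_lt_one hz⟩,
    hf.strictMonoOn_deriv.injOn, fun u hu ↦ ?_⟩
  obtain ⟨Z, hZ⟩ := eventually_atTop.1 (hf.tendsto_deriv.eventually (eventually_gt_nhds hu.2))
  obtain ⟨z, hz, rfl⟩ := intermediate_value_Icc (le_max_right Z 0)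
    (fun x _ ↦ (hf.hasDerivAt_deriv x).continuousAt.continuousWithinAt)
    ⟨hu.1, (hZ _ (le_max_left Z 0)).le⟩
  exact ⟨z, hz.1, rfl⟩

theorem invOn_croccoTime (hf : IsSolution β f) :
    InvOn (croccoTime f) (deriv f) (Ici 0) (Ico (deriv f 0) 1) :=
  hf.bijOn_deriv.invOn_invFunOn

theorem croccoTime_nonneg (hf : IsSolution β f) {u : ℝ} (hu : u ∈ Ico (deriv f 0) 1) :
    0 ≤ croccoTime f u :=
  invFunOn_mem (hf.bijOn_deriv.surjOn hu)

theorem deriv_croccoTime (hf : IsSolution β f) {u : ℝ} (hu : u ∈ Ico (deriv f 0) 1) :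
    deriv f (croccoTime f u) = u :=
  hf.invOn_croccoTime.2 hu

theorem croccoTime_deriv_zero (hf : IsSolution β f) : croccoTime f (deriv f 0) = 0 :=
  hf.invOn_croccoTime.1 self_mem_Ici

theorem croccoTime_pos (hf : IsSolution β f) {u : ℝ} (hu : u ∈ Ioo (deriv f 0) 1) :
    0 < croccoTime f u := by
  refine (hf.croccoTime_nonneg (Ioo_subset_Ico_self hu)).lt_of_ne fun h ↦ hu.1.ne ?_
  rw [← hf.deriv_croccoTime (Ioo_subset_Ico_self hu), ← h]

theorem image_croccoTime (hf : IsSolution β f) : croccoTime f '' Ico (deriv f 0) 1 = Ici 0 :=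
  (hf.bijOn_deriv.symm hf.invOn_croccoTime.symm).image_eq

theorem monotoneOn_croccoTime (hf : IsSolution β f) :
    MonotoneOn (croccoTime f) (Ico (deriv f 0) 1) :=
  fun u hu v hv huv ↦ (hf.strictMonoOn_deriv.le_iff_le (hf.croccoTime_nonneg hu)
    (hf.croccoTime_nonneg hv)).1 (by rwa [hf.deriv_croccoTime hu, hf.deriv_croccoTime hv])

theorem continuousOn_croccoTime (hf : IsSolution β f) :
    ContinuousOn (croccoTime f) (Ico (deriv f 0) 1) := by
  intro u hu
  rcases hu.1.eq_or_lt with rfl | hlt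
  · refine (continuousWithinAt_right_of_monotoneOn_of_image_mem_nhdsWithin
      hf.monotoneOn_croccoTime (Ico_mem_nhdsGE hu.2) ?_).mono Ico_subset_Ici_self
    rw [hf.image_croccoTime, hf.croccoTime_deriv_zero]
    exact self_mem_nhdsWithin
  · refine (continuousAt_of_monotoneOn_of_image_mem_nhds hf.monotoneOn_croccoTime
      (Ico_mem_nhds hlt hu.2) ?_).continuousWithinAt
    rw [hf.image_croccoTime]
    exact Ici_mem_nhds (hf.croccoTime_pos ⟨hlt, hu.2⟩)

theorem croccoShear_pos (hf : IsSolution β f) {u : ℝ} (hu : u ∈ Ico (deriv f 0) 1) :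
    0 < croccoShear f u :=
  hf.deriv2_pos _ (hf.croccoTime_nonneg hu)

theorem hasDerivAt_croccoTime (hf : IsSolution β f) {u : ℝ} (hu : u ∈ Ioo (deriv f 0) 1) :
    HasDerivAt (croccoTime f) (croccoShear f u)⁻¹ u :=
  (hf.hasDerivAt_deriv _).of_local_left_inverse
    ((hf.continuousOn_croccoTime u (Ioo_subset_Ico_self hu)).continuousAt
      (Ico_mem_nhds hu.1 hu.2))
    (hf.croccoShear_pos (Ioo_subset_Ico_self hu)).ne'
    (by filter_upwards [Ioo_mem_nhds hu.1 hu.2] with v hv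
        using hf.deriv_croccoTime (Ioo_subset_Ico_self hv))

theorem isCroccoSolution (hf : IsSolution β f) :
    IsCroccoSolution_s16 β (deriv f 0) 1 (croccoShear f) (croccoStream f) where
  continuousOn_shear := (continuous_iff_continuousAt.2 fun z ↦
    (hf.hasDerivAt_deriv2 z).continuousAt).comp_continuousOn hf.continuousOn_croccoTime
  continuousOn_stream := hf.contDiff.continuous.comp_continuousOn hf.continuousOn_croccoTime
  shear_pos u hu := hf.croccoShear_pos (Ioo_subset_Ico_self hu)
  hasDerivAt_shear u hu := by
    have hode := hf.ode _ (hf.croccoTime_nonneg (Ioo_subset_Ico_self hu))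
    rw [hf.deriv_croccoTime (Ioo_subset_Ico_self hu)] at hode
    have hne := (hf.croccoShear_pos (Ioo_subset_Ico_self hu)).ne'
    refine ((hf.hasDerivAt_deriv2 _).comp u (hf.hasDerivAt_croccoTime hu)).congr_deriv ?_
    unfold croccoShear croccoStream at *
    field_simp
    linear_combination hode
  hasDerivAt_stream u hu := by
    refine ((hf.hasDerivAt _).comp u (hf.hasDerivAt_croccoTime hu)).congr_deriv ?_
    rw [hf.deriv_croccoTime (Ioo_subset_Ico_self hu), div_eq_mul_inv]

theorem tendsto_deriv2 (hf : IsSolution β f) (hβ : 0 ≤ β) :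
    Tendsto (deriv^[2] f) atTop (𝓝 0) := by
  obtain ⟨Z, hZ⟩ := eventually_atTop.1 ((tendsto_atTop_of_tendsto_deriv
    (fun z ↦ (hf.hasDerivAt z).differentiableAt) one_pos hf.tendsto_deriv).eventually_gt_atTop 0)
  have hZ0 : 0 ≤ max Z 0 := le_max_right Z 0
  refine tendsto_zero_of_hasDerivAt_of_antitoneOn (Z := max Z 0) (C := 1) hf.hasDerivAt_deriv ?_
    (fun z hz ↦ (hf.deriv2_pos z (hZ0.trans hz)).le)
    fun z hz ↦ (hf.deriv_lt_one (hZ0.trans hz)).le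
  -- beyond `Z`, where `f > 0`, the equation gives `f''' = -f f'' - β (1 - f'²) ≤ 0`
  refine antitoneOn_of_hasDerivWithinAt_nonpos (convex_Ici _)
    (fun z _ ↦ (hf.hasDerivAt_deriv2 z).continuousAt.continuousWithinAt)
    (fun z _ ↦ (hf.hasDerivAt_deriv2 z).hasDerivWithinAt) fun z hz ↦ ?_
  rw [interior_Ici, mem_Ioi, max_lt_iff] at hz
  have hode := hf.ode z hz.2.le
  have hf'z := hf.deriv_mem_Ioo z hz.2
  have hβf' : 0 ≤ β * (1 - deriv f z ^ 2) := mul_nonneg hβ (by nlinarith [hf'z.1, hf'z.2])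
  nlinarith [mul_pos (hZ z hz.1.le) (hf.deriv2_pos z hz.2.le)]

theorem tendsto_croccoTime (hf : IsSolution β f) : Tendsto (croccoTime f) (𝓝[<] 1) atTop := by
  refine tendsto_atTop.2 fun Z ↦ ?_
  have hZ0 : 0 ≤ max Z 0 := le_max_right Z 0
  filter_upwards [Ioo_mem_nhdsLT (hf.deriv_lt_one hZ0)] with u hu
  have hu' : u ∈ Ico (deriv f 0) 1 :=
    ⟨(hf.strictMonoOn_deriv.monotoneOn self_mem_Ici hZ0 hZ0).trans hu.1.le, hu.2⟩
  refine (le_max_left Z 0).trans ((hf.strictMonoOn_deriv.le_iff_le hZ0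
    (hf.croccoTime_nonneg hu')).1 ?_)
  rw [hf.deriv_croccoTime hu']
  exact hu.1.le

theorem tendsto_croccoShear (hf : IsSolution β f) (hβ : 0 ≤ β) :
    Tendsto (croccoShear f) (𝓝[<] 1) (𝓝 0) :=
  (hf.tendsto_deriv2 hβ).comp hf.tendsto_croccoTime

theorem deriv2_zero_le {g : ℝ → ℝ} (hf : IsSolution β f) (hg : IsSolution β g) (hβ : 0 ≤ β)
    (h0 : f 0 = g 0) (h1 : deriv f 0 = deriv g 0) : deriv^[2] f 0 ≤ deriv^[2] g 0 := by
  by_contra! hlt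
  have hCg := hg.isCroccoSolution
  rw [← h1] at hCg
  have hq : croccoStream f (deriv f 0) = croccoStream g (deriv f 0) := by
    rw [croccoStream, croccoStream, hf.croccoTime_deriv_zero, h1, hg.croccoTime_deriv_zero, h0]
  have hp : croccoShear g (deriv f 0) < croccoShear f (deriv f 0) := by
    rwa [croccoShear, croccoShear, hf.croccoTime_deriv_zero, h1, hg.croccoTime_deriv_zero]
  obtain ⟨u, hsmall, hu⟩ := (((hf.tendsto_croccoShear hβ).eventually
    (gt_mem_nhds (sub_pos.2 hp))).and (Ioo_mem_nhdsLT (hf.deriv_lt_one le_rfl))).exists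
  have := hf.isCroccoSolution.sub_le_sub hCg hβ hf.deriv_zero_nonneg le_rfl hq hp ⟨hu.1.le, hu.2⟩
  linarith [hCg.shear_pos u hu]

end IsSolution

end FalknerSkan

open FalknerSkan in
theorem falkner_skan_uniqueness_general
    (β f0 f1 : ℝ) (hβ : 0 < β)
    (f g : ℝ → ℝ)
    (hf : ContDiff ℝ 3 f) (hg : ContDiff ℝ 3 g)
    (hodef : ∀ z ≥ (0:ℝ),
      deriv^[3] f z + f z * deriv^[2] f z + β * (1 - (deriv f z) ^ 2) = 0)
    (hodeg : ∀ z ≥ (0:ℝ),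
      deriv^[3] g z + g z * deriv^[2] g z + β * (1 - (deriv g z) ^ 2) = 0)
    (hf0 : f 0 = f0) (hg0 : g 0 = f0)
    (hf'0 : deriv f 0 = f1) (hg'0 : deriv g 0 = f1)
    (hlimf : Tendsto (deriv f) atTop (nhds 1))
    (hlimg : Tendsto (deriv g) atTop (nhds 1))
    (hrangef : ∀ z > (0:ℝ), 0 < deriv f z ∧ deriv f z < 1)
    (hrangeg : ∀ z > (0:ℝ), 0 < deriv g z ∧ deriv g z < 1)
    (hconvf : ∀ z ≥ (0:ℝ), 0 < deriv^[2] f z)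
    (hconvg : ∀ z ≥ (0:ℝ), 0 < deriv^[2] g z) :
    EqOn f g (Ici 0) := by
  have hF : IsSolution β f := ⟨hf, hodef, hlimf, hrangef, hconvf⟩
  have hG : IsSolution β g := ⟨hg, hodeg, hlimg, hrangeg, hconvg⟩
  have h0 : f 0 = g 0 := hf0.trans hg0.symm
  have h1 : deriv f 0 = deriv g 0 := hf'0.trans hg'0.symm
  have h2 : deriv^[2] f 0 = deriv^[2] g 0 :=
    (hF.deriv2_zero_le hG hβ.le h0 h1).antisymm (hG.deriv2_zero_le hF hβ.le h0.symm h1.symm)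
  exact eqOn_Ici_of_secondJet_eq hf hg hodef hodeg (by simp only [secondJet, h0, h1, h2])

/-- Uniqueness of the normal solution to the Falkner–Skan boundary value problem. -/
theorem falkner_skan_uniqueness
    (β f0 f1 : ℝ) (hβ : 0 < β) (hf10 : 0 ≤ f1) (hf11 : f1 < 1)
    (f g : ℝ → ℝ)
    (hf : ContDiff ℝ 3 f) (hg : ContDiff ℝ 3 g)
    (hodef : ∀ z ≥ (0:ℝ),
      deriv^[3] f z + f z * deriv^[2] f z + β * (1 - (deriv f z) ^ 2) = 0)
    (hodeg : ∀ z ≥ (0:ℝ),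
      deriv^[3] g z + g z * deriv^[2] g z + β * (1 - (deriv g z) ^ 2) = 0)
    (hf0 : f 0 = f0) (hg0 : g 0 = f0)
    (hf'0 : deriv f 0 = f1) (hg'0 : deriv g 0 = f1)
    (hlimf : Tendsto (deriv f) atTop (nhds 1))
    (hlimg : Tendsto (deriv g) atTop (nhds 1))
    (hrangef : ∀ z > (0:ℝ), 0 < deriv f z ∧ deriv f z < 1)
    (hrangeg : ∀ z > (0:ℝ), 0 < deriv g z ∧ deriv g z < 1)
    (hconvf : ∀ z ≥ (0:ℝ), 0 < deriv^[2] f z)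
    (hconvg : ∀ z ≥ (0:ℝ), 0 < deriv^[2] g z) :
    EqOn f g (Ici 0) :=
  falkner_skan_uniqueness_general β f0 f1 hβ f g hf hg hodef hodeg hf0 hg0 hf'0 hg'0 hlimf hlimg
    hrangef hrangeg hconvf hconvg
end
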